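/- Let r/s = [a_1,b_1,…,a_m,b_m] and let λ = λ(r/s), μ = μ(r/s) be the partitions such that the snake graph G(r/s) is the skew shape λ/μ. Then μ = (μ_1^{c_1},…,μ_m^{c_m}) where μ_i = λ_i − 1, c_1 = b_m − 1, and c_i = b_{m+1−i} for i ≥ 2, with λ_k = ∑_{i=1}^{m+1−k} a_i. -/

import Mathlib

/-- Tile word of the snake graph of `[a₁,…,a₂ₘ]` (`false` = right, `true` = up). -/
def snakeWord (a : List ℕ) : List Bool :=
  (List.range a.length).flatMap fun i =>
    List.replicate
      (if i = 0 ∨ i = a.length - 1 then a.getD i 0 - 1 else a.getD i 0)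
      (i % 2 == 1)

/-- Position of the `j`-th tile of the snake graph with word `w`. -/
def tilePos (w : List Bool) (j : ℕ) : ℕ × ℕ :=
  ((w.take j).count false, (w.take j).count true)

/-- The height (number of rows) of the snake graph with word `w`. -/
def snakeHeight (w : List Bool) : ℕ := w.count true + 1

/-- Length of row `y` of the partition `λ(G)` (rows indexed from the bottom). -/
def rowLen (w : List Bool) (y : ℕ) : ℕ :=
  ((Finset.range (w.length + 1)).filter fun j => (tilePos w j).2 ≤ y).sup
    (fun j => (tilePos w j).1) + 1

/-- Length of row `y` of the partition `μ(G)`, where the snake graph `G` is the skew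
shape `λ(G)/μ(G)`: the number of boxes of row `y` of `λ(G)` to the left of the tiles
of `G` in row `y`. -/
def rowMin (w : List Bool) (y : ℕ) : ℕ :=
  rowLen w y - ((Finset.range (w.length + 1)).filter fun j => (tilePos w j).2 = y).card

/-- Interleave `[a₁,…,aₘ]` and `[b₁,…,bₘ]` into `[a₁,b₁,…,aₘ,bₘ]`. -/
def interleave (a b : List ℕ) : List ℕ := (a.zip b).flatMap fun p => [p.1, p.2]


/-- Number of `false`s occurring before the `y`-th `true` in `w`. -/
def Fcount : List Bool → ℕ → ℕ
  | _, 0 => 0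
  | [], _ + 1 => 0
  | false :: w, y + 1 => Fcount w (y + 1) + 1
  | true :: w, y + 1 => Fcount w y

@[simp] lemma Fcount_zero (w : List Bool) : Fcount w 0 = 0 := by
  cases w with
  | nil => rfl
  | cons c t => cases c <;> rfl

@[simp] lemma Fcount_nil (y : ℕ) : Fcount [] y = 0 := by cases y <;> rfl

@[simp] lemma Fcount_false (w : List Bool) (y : ℕ) :
    Fcount (false :: w) (y + 1) = Fcount w (y + 1) + 1 := rfl

@[simp] lemma Fcount_true (w : List Bool) (y : ℕ) :
    Fcount (true :: w) (y + 1) = Fcount w y := rfl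

lemma Fcount_mono (w : List Bool) : ∀ y, Fcount w y ≤ Fcount w (y + 1) := by
  induction w with
  | nil => intro y; simp
  | cons c t ih =>
    intro y
    cases c <;> cases y <;> simp <;> exact ih _

lemma range_succ_insert (n : ℕ) :
    Finset.range (n + 1) = insert 0 ((Finset.range n).image (· + 1)) := by
  ext x
  simp only [Finset.mem_range, Finset.mem_insert, Finset.mem_image]
  constructor
  · intro h
    cases x with
    | zero => exact Or.inl rfl
    | succ k => exact Or.inr ⟨k, by omega, rfl⟩
  · rintro (rfl | ⟨k, hk, rfl⟩) <;> omega

lemma sup_add_one {s : Finset ℕ} (h : s.Nonempty) (f : ℕ → ℕ) :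
    s.sup (fun j => f j + 1) = s.sup f + 1 := by
  rw [← Finset.sup'_eq_sup h, ← Finset.sup'_eq_sup h]
  exact (Finset.comp_sup'_eq_sup'_comp h (fun x => x + 1)
    (fun x y => (max_add_add_right x y 1).symm)).symm

lemma sup_filter_eq_Fcount (w : List Bool) : ∀ y : ℕ,
    (((Finset.range (w.length + 1)).filter fun j => ((w.take j).count true) ≤ y).sup
      fun j => (w.take j).count false) = Fcount w (y + 1) := by
  induction w with
  | nil =>
    intro y
    simp
  | cons c t ih =>
    intro y
    rw [show (c :: t).length + 1 = (t.length + 1) + 1 from rfl, range_succ_insert,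
      Finset.filter_insert]
    rw [if_pos (by simp)]
    rw [Finset.sup_insert]
    rw [Finset.filter_image, Finset.sup_image]
    cases c with
    | false =>
      simp only [Function.comp_def, List.take_succ_cons, List.count_cons, List.take_zero,
        List.count_nil]
      norm_num
      rw [sup_add_one ⟨0, by simp⟩, ih y]
    | true =>
      simp only [Function.comp_def, List.take_succ_cons, List.count_cons, List.take_zero,
        List.count_nil]
      norm_num
      cases y with
      | zero =>
        rw [Finset.filter_false_of_mem (by intro x hx; omega)]
        simp
      | succ y' =>
        simp only [Nat.lt_add_one_iff]
        rw [ih y']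
lemma card_filter_eq_Fcount (w : List Bool) : ∀ y : ℕ,
    ((Finset.range (w.length + 1)).filter fun j => ((w.take j).count true) = y).card
      = if y ≤ w.count true then Fcount w (y + 1) + 1 - Fcount w y else 0 := by
  induction w with
  | nil =>
    intro y
    cases y <;> simp
  | cons c t ih =>
    intro y
    rw [show (c :: t).length + 1 = (t.length + 1) + 1 from rfl, range_succ_insert,
      Finset.filter_insert, Finset.filter_image]
    cases c with
    | false =>
      simp only [List.take_succ_cons, List.count_cons, List.take_zero, List.count_nil]
      norm_num
      cases y with
      | zero =>
        rw [if_pos rfl, Finset.card_insert_of_notMem (by simp),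
          Finset.card_image_of_injective _ (add_left_injective 1), ih 0]
        have := Fcount_mono t 0
        simp only [Nat.zero_le, if_pos, Fcount_zero, Fcount_false]
        omega
      | succ y' =>
        rw [if_neg (by omega), Finset.card_image_of_injective _ (add_left_injective 1), ih (y' + 1)]
        have := Fcount_mono t (y' + 1)
        by_cases hc : y' + 1 ≤ List.count true t
        · rw [if_pos hc, if_pos hc]
          simp only [Fcount_false]
          omega
        · rw [if_neg hc, if_neg hc]
    | true =>
      simp only [List.take_succ_cons, List.count_cons, List.take_zero, List.count_nil]
      norm_num
      cases y with
      | zero =>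
        rw [if_pos rfl, Finset.card_insert_of_notMem (by simp)]
        rw [Finset.filter_false_of_mem (by intro x hx; omega)]
        simp
      | succ y' =>
        rw [if_neg (by omega), Finset.card_image_of_injective _ (add_left_injective 1)]
        simp only [Nat.add_right_cancel_iff]
        rw [ih y']
        simp only [Fcount_true, Fcount_zero]
        have h1 : y' + 1 ≤ List.count true t + 1 ↔ y' ≤ List.count true t := by omega
        by_cases hc : y' ≤ List.count true t
        · rw [if_pos hc, if_pos (by omega)]
        · rw [if_neg hc, if_neg (by omega)]
/-- Word made of blocks of rights and ups. -/
def blocks : List (ℕ × ℕ) → List Bool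
  | [] => []
  | (x, y) :: t => List.replicate x false ++ List.replicate y true ++ blocks t

lemma Fcount_replicate_false_append (v : List Bool) : ∀ (x t : ℕ),
    Fcount (List.replicate x false ++ v) t = if t = 0 then 0 else x + Fcount v t := by
  intro x
  induction x with
  | zero =>
    intro t
    cases t <;> simp
  | succ x ih =>
    intro t
    cases t with
    | zero => simp
    | succ t' =>
      rw [List.replicate_succ, List.cons_append, Fcount_false, ih (t' + 1)]
      simp
      omega
lemma Fcount_replicate_true_append (v : List Bool) : ∀ (y t : ℕ),
    Fcount (List.replicate y true ++ v) t = if t ≤ y then 0 else Fcount v (t - y) := by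
  intro y
  induction y with
  | zero =>
    intro t
    cases t <;> simp
  | succ y ih =>
    intro t
    cases t with
    | zero => simp
    | succ t' =>
      rw [List.replicate_succ, List.cons_append, Fcount_true, ih t']
      simp only [Nat.add_le_add_iff_right, Nat.succ_sub_succ]

lemma blocks_cons (x y : ℕ) (t : List (ℕ × ℕ)) :
    blocks ((x, y) :: t) = List.replicate x false ++ (List.replicate y true ++ blocks t) := by
  simp [blocks]

lemma count_true_blocks (L : List (ℕ × ℕ)) :
    (blocks L).count true = (L.map Prod.snd).sum := by
  induction L with
  | nil => simp [blocks]
  | cons p t ih =>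
    obtain ⟨x, y⟩ := p
    simp [blocks, ih, List.count_replicate]

/-- `μ`-row lengths from bottom to top, with accumulator `c`. -/
def rhsList (c : ℕ) : List (ℕ × ℕ) → List ℕ
  | [] => []
  | (x, y) :: t => List.replicate y (c + x) ++ rhsList (c + x) t

lemma map_Fcount_blocks (L : List (ℕ × ℕ)) : ∀ c : ℕ,
    (List.range ((L.map Prod.snd).sum)).map (fun i => c + Fcount (blocks L) (i + 1))
      = rhsList c L := by
  induction L with
  | nil => intro c; simp [rhsList]
  | cons p t ih =>
    obtain ⟨x, y⟩ := p
    intro c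
    simp only [List.map_cons, List.sum_cons, rhsList]
    rw [List.range_add, List.map_append, List.map_map]
    congr 1
    · rw [List.eq_replicate_iff]
      refine ⟨by simp, ?_⟩
      intro v hv
      rw [List.mem_map] at hv
      obtain ⟨i, hi, rfl⟩ := hv
      rw [List.mem_range] at hi
      show c + Fcount (blocks ((x, y) :: t)) (i + 1) = c + x
      rw [blocks_cons, Fcount_replicate_false_append, if_neg (by omega),
        Fcount_replicate_true_append, if_pos (by omega)]
      simp
    · rw [← ih (c + x)]
      apply List.map_congr_left
      intro i _
      show c + Fcount (blocks ((x, y) :: t)) (y + i + 1) = c + x + Fcount (blocks t) (i + 1)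
      rw [blocks_cons, Fcount_replicate_false_append, if_neg (by omega),
        Fcount_replicate_true_append, if_neg (by omega)]
      have : y + i + 1 - y = i + 1 := by omega
      rw [this]
      omega
lemma rowMin_eq_Fcount (w : List Bool) (y : ℕ) (hy : y ≤ w.count true) :
    rowMin w y = Fcount w y := by
  unfold rowMin rowLen
  simp only [tilePos]
  erw [sup_filter_eq_Fcount, card_filter_eq_Fcount, if_pos hy]
  have := Fcount_mono w y
  omega

lemma range_reverse_map (n : ℕ) (f : ℕ → ℕ) :
    (List.range (n + 1)).map (fun i => f (n - i)) = ((List.range (n + 1)).map f).reverse := by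
  apply List.ext_getElem
  · simp
  · intro i h1 h2
    simp only [List.length_map, List.length_range] at h1
    simp only [List.getElem_map, List.getElem_range, List.getElem_reverse,
      List.length_map, List.length_range]
    have h3 : n + 1 - 1 - i = n - i := by omega
    rw [h3]

lemma range_succ_map_head (n : ℕ) (f : ℕ → ℕ) :
    (List.range (n + 1)).map f = f 0 :: (List.range n).map (fun i => f (i + 1)) := by
  rw [show n + 1 = 1 + n by omega, List.range_add, List.map_append, List.map_map]
  rw [show List.range 1 = [0] from rfl]
  simp [Function.comp_def, Nat.add_comm 1]

lemma flatMap_range_add {α : Type*} (p k : ℕ) (f : ℕ → List α) :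
    (List.range (p + k)).flatMap f
      = (List.range p).flatMap f ++ (List.range k).flatMap (fun i => f (p + i)) := by
  rw [List.range_add, List.flatMap_append, List.flatMap_map]
/-- Like `snakeWord` but only the last letter count is decremented. -/
def snakeTail (c : List ℕ) : List Bool :=
  (List.range c.length).flatMap fun i =>
    List.replicate (if i = c.length - 1 then c.getD i 0 - 1 else c.getD i 0) (i % 2 == 1)

/-- Decrement the second component of the last pair. -/
def adjustLast : List (ℕ × ℕ) → List (ℕ × ℕ)
  | [] => []
  | [(x, y)] => [(x, y - 1)]
  | p :: q :: t => p :: adjustLast (q :: t)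

lemma interleave_cons (a0 b0 : ℕ) (a b : List ℕ) :
    interleave (a0 :: a) (b0 :: b) = a0 :: b0 :: interleave a b := rfl

lemma interleave_length : ∀ (a b : List ℕ), a.length = b.length →
    (interleave a b).length = 2 * a.length := by
  intro a
  induction a with
  | nil => intro b h; rfl
  | cons a0 a' ih =>
    intro b h
    cases b with
    | nil => simp at h
    | cons b0 b' =>
      rw [interleave_cons]
      simp only [List.length_cons] at h ⊢
      rw [ih b' (by omega)]
      omega

lemma snakeTail_interleave : ∀ (a b : List ℕ), a.length = b.length →
    snakeTail (interleave a b) = blocks (adjustLast (a.zip b)) := by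
  intro a
  induction a with
  | nil => intro b h; rfl
  | cons a0 a' ih =>
    intro b h
    cases b with
    | nil => simp at h
    | cons b0 b' =>
      cases a' with
      | nil =>
        cases b' with
        | nil =>
          show snakeTail [a0, b0] = blocks [(a0, b0 - 1)]
          unfold snakeTail
          rw [show ([a0, b0] : List ℕ).length = 2 from rfl,
            show List.range 2 = [0, 1] from rfl]
          simp [List.flatMap, blocks]
        | cons b1 b'' => simp at h
      | cons a1 a'' =>
        cases b' with
        | nil => simp at h
        | cons b1 b'' =>
          have hlen' : a''.length = b''.length := by
            simp only [List.length_cons] at h; omega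
          unfold snakeTail
          rw [interleave_cons]
          set w : List ℕ := interleave (a1 :: a'') (b1 :: b'') with hw
          have hwlen : w.length = 2 * (a''.length + 1) := by
            rw [hw]; rw [interleave_length _ _ (by simp [hlen'])]; simp
          simp only [List.length_cons]
          simp only [Nat.add_sub_cancel]
          rw [show w.length + 1 + 1 = 2 + w.length by omega, flatMap_range_add]
          rw [show List.range 2 = [0, 1] from rfl]
          have hz : (adjustLast ((a0 :: a1 :: a'').zip (b0 :: b1 :: b''))) =
              (a0, b0) :: adjustLast ((a1 :: a'').zip (b1 :: b'')) := rfl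
          rw [hz, blocks_cons, ← ih (b1 :: b'') (by simp [hlen'])]
          have htail : (List.range w.length).flatMap (fun i =>
              List.replicate
                (if 2 + i = w.length + 1 then (a0 :: b0 :: w).getD (2 + i) 0 - 1
                  else (a0 :: b0 :: w).getD (2 + i) 0) ((2 + i) % 2 == 1))
              = snakeTail w := by
            unfold snakeTail
            apply List.flatMap_congr
            intro i hi
            rw [List.mem_range] at hi
            have h2 : (2 + i = w.length + 1) = (i = w.length - 1) := by
              apply propext; omega
            have h3 : (a0 :: b0 :: w).getD (2 + i) 0 = w.getD i 0 := by
              rw [show 2 + i = i + 1 + 1 by omega]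
              simp [List.getD_cons_succ]
            simp only [h2, h3, Nat.add_mod_left]
          rw [htail]
          simp only [List.flatMap_cons, List.flatMap_nil]
          have c0 : (if (0:ℕ) = w.length + 1 then (a0 :: b0 :: w).getD 0 0 - 1
              else (a0 :: b0 :: w).getD 0 0) = a0 := by
            rw [if_neg (by omega)]; rfl
          have c1 : (if (1:ℕ) = w.length + 1 then (a0 :: b0 :: w).getD 1 0 - 1
              else (a0 :: b0 :: w).getD 1 0) = b0 := by
            rw [if_neg (by omega)]; rfl
          rw [c0, c1]
          simp [List.append_assoc]
          rfl
lemma snakeWord_interleave (a0 : ℕ) (a' b : List ℕ) (hb : b.length = a'.length + 1) :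
    snakeWord (interleave (a0 :: a') b) = snakeTail (interleave ((a0 - 1) :: a') b) := by
  cases b with
  | nil => simp at hb
  | cons b0 b' =>
    unfold snakeWord snakeTail
    rw [interleave_cons, interleave_cons]
    set w : List ℕ := interleave a' b' with hw
    simp only [List.length_cons]
    apply List.flatMap_congr
    intro i hi
    rw [List.mem_range] at hi
    simp only [Nat.add_sub_cancel]
    cases i with
    | zero =>
      have h1 : ((0:ℕ) = 0 ∨ (0:ℕ) = w.length + 1) = True := by
        simp
      have h2 : ((0:ℕ) = w.length + 1) = False := by
        simp only [eq_iff_iff, iff_false]; omega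
      simp only [h1, h2, if_true, if_false]
      rfl
    | succ i' =>
      have h1 : (i' + 1 = 0 ∨ i' + 1 = w.length + 1) = (i' + 1 = w.length + 1) := by
        simp
      simp only [h1]
      have h3 : (a0 :: b0 :: w).getD (i' + 1) 0 = ((a0 - 1) :: b0 :: w).getD (i' + 1) 0 := by
        simp [List.getD_cons_succ]
      rw [h3]

lemma rhsList_adjustLast : ∀ (a b : List ℕ) (c : ℕ), a.length = b.length →
    rhsList c (adjustLast (a.zip b))
      = (List.range a.length).flatMap fun j =>
          List.replicate (if j = a.length - 1 then b.getD j 0 - 1 else b.getD j 0)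
            (c + (a.take (j + 1)).sum) := by
  intro a
  induction a with
  | nil => intro b c h; rfl
  | cons x a' ih =>
    intro b c h
    cases b with
    | nil => simp at h
    | cons y b' =>
      cases a' with
      | nil =>
        cases b' with
        | nil =>
          show rhsList c [(x, y - 1)] = _
          rw [show List.range ([x] : List ℕ).length = [0] from rfl]
          simp [rhsList]
        | cons => simp at h
      | cons x1 a'' =>
        cases b' with
        | nil => simp at h
        | cons y1 b'' =>
          have hlen' : a''.length = b''.length := by
            simp only [List.length_cons] at h; omega
          have hz : adjustLast ((x :: x1 :: a'').zip (y :: y1 :: b'')) =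
              (x, y) :: adjustLast ((x1 :: a'').zip (y1 :: b'')) := rfl
          rw [hz]
          show List.replicate y (c + x)
              ++ rhsList (c + x) (adjustLast ((x1 :: a'').zip (y1 :: b''))) = _
          simp only [List.length_cons, Nat.add_sub_cancel]
          conv_rhs => rw [show a''.length + 1 + 1 = 1 + (a''.length + 1) by omega,
            flatMap_range_add, show List.range 1 = [0] from rfl]
          simp only [List.flatMap_cons, List.flatMap_nil, List.append_nil]
          rw [ih (y1 :: b'') (c + x) (by simp [hlen'])]
          simp only [List.length_cons, Nat.add_sub_cancel]
          have hhead : List.replicate y (c + x) =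
              List.replicate (if (0:ℕ) = a''.length + 1 then (y :: y1 :: b'').getD 0 0 - 1
                else (y :: y1 :: b'').getD 0 0) (c + ((x :: x1 :: a'').take (0 + 1)).sum) := by
            rw [if_neg (by omega)]
            simp [List.take_succ_cons]
          rw [← hhead]
          congr 1
          · apply List.flatMap_congr
            intro j hj
            rw [List.mem_range] at hj
            have h2 : (1 + j = a''.length + 1) = (j = a''.length) := by
              apply propext; omega
            have h3 : (y :: y1 :: b'').getD (1 + j) 0 = (y1 :: b'').getD j 0 := by
              rw [show 1 + j = j + 1 by omega]
              simp [List.getD_cons_succ]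
            have h4 : ((x :: x1 :: a'').take (1 + j + 1)).sum
                = x + ((x1 :: a'').take (j + 1)).sum := by
              rw [show 1 + j + 1 = (j + 1) + 1 by omega]
              simp [List.take_succ_cons]
            simp only [h2, h3, h4]
            rw [Nat.add_assoc]

/-- For `r/s = [a₁,b₁,…,aₘ,bₘ]`, with `G(r/s)` the skew shape `λ/μ`,
the partition `μ(r/s)` (rows listed top to bottom, padded with a final zero row) is
`(μ₁^{c₁},…,μₘ^{cₘ})` where `μᵢ = λᵢ - 1`, `c₁ = bₘ - 1` and `cᵢ = b_{m+1-i}` for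
`i ≥ 2`, with `λₖ = a₁ + ⋯ + a_{m+1-k}`. -/
theorem snake_mu_partition (m : ℕ) (hm : 0 < m) (a b : List ℕ)
    (ha : a.length = m) (hb : b.length = m)
    (hapos : ∀ x ∈ a, 1 ≤ x) (hbpos : ∀ x ∈ b, 1 ≤ x) :
    (List.range (snakeHeight (snakeWord (interleave a b)))).map
        (fun i => rowMin (snakeWord (interleave a b))
          (snakeHeight (snakeWord (interleave a b)) - 1 - i)) =
      ((List.range m).flatMap fun j =>
        List.replicate (if j = 0 then b.getD (m - 1) 0 - 1 else b.getD (m - 1 - j) 0)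
          ((a.take (m - j)).sum - 1)) ++ [0] := by
  cases a with
  | nil => rw [List.length_nil] at ha; omega
  | cons a0 a' =>
    have ha' : a'.length + 1 = m := by simpa using ha
    have hblen : b.length = a'.length + 1 := by omega
    have ha0 : 1 ≤ a0 := hapos a0 (by simp)
    have hword : snakeWord (interleave (a0 :: a') b)
        = blocks (adjustLast (((a0 - 1) :: a').zip b)) := by
      rw [snakeWord_interleave a0 a' b hblen,
        snakeTail_interleave _ _ (by simp [hblen])]
    rw [hword]
    set L := adjustLast (((a0 - 1) :: a').zip b) with hL
    set T := (L.map Prod.snd).sum with hT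
    have hcount : (blocks L).count true = T := count_true_blocks L
    simp only [snakeHeight, hcount, Nat.add_sub_cancel]
    have hmap : ∀ i ∈ List.range (T + 1),
        rowMin (blocks L) (T - i) = Fcount (blocks L) (T - i) := by
      intro i _
      exact rowMin_eq_Fcount _ _ (by rw [hcount]; omega)
    rw [List.map_congr_left hmap, range_reverse_map T (Fcount (blocks L)),
      range_succ_map_head T (Fcount (blocks L)), Fcount_zero]
    have hC := map_Fcount_blocks L 0
    simp only [Nat.zero_add] at hC
    rw [← hT] at hC
    rw [hC, List.reverse_cons]
    congr 1
    rw [List.reverse_eq_iff, List.reverse_flatMap]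
    have hrev : (List.range m).reverse = (List.range m).map (fun j => m - 1 - j) := by
      have := range_reverse_map (m - 1) id
      simp only [List.map_id] at this
      rw [show m - 1 + 1 = m by omega] at this
      rw [← this]
      apply List.map_congr_left
      intro i _
      rfl
    rw [hrev, List.flatMap_map]
    have hkey := rhsList_adjustLast ((a0 - 1) :: a') b 0 (by simp [hblen])
    simp only [Nat.zero_add, List.length_cons, Nat.add_sub_cancel, ha'] at hkey
    rw [hkey]
    apply List.flatMap_congr
    intro j hj
    rw [List.mem_range] at hj
    simp only [Function.comp]
    rw [List.reverse_replicate]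
    have e1 : (m - 1 - (m - 1 - j) : ℕ) = j := by omega
    have e2 : (m - (m - 1 - j) : ℕ) = j + 1 := by omega
    have e3 : ((m - 1 - j : ℕ) = 0) = (j = m - 1) := by apply propext; omega
    simp only [e1, e2, e3]
    have e4 : (((a0 - 1) :: a').take (j + 1)).sum = ((a0 :: a').take (j + 1)).sum - 1 := by
      simp only [List.take_succ_cons, List.sum_cons]
      omega
    rw [e4]
    by_cases hjm : j = m - 1
    · rw [if_pos hjm, if_pos hjm, hjm]
    · rw [if_neg hjm, if_neg hjm]
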